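/- arXiv:1309.0068 — 2 statements merged into one kernel-verified Lean document; each statement's English description precedes it below -/
import Mathlib

section
/- Let A be a unital C*-algebra and r: A → A a linear map such that r(a)*·r(a) ≤ K·a*·a for all a ∈ A and some constant K ≥ 0. Then r(a) = r(1)·a for all a ∈ A. -/
/-!
Replacing `r` by `d := r - (r 1 * ·)` gives a linear map with `d 1 = 0` and
`d(b)⋆ d(b) ≤ K' b⋆b`. For self-adjoint `b`, the positive element `x := d(b)⋆ d(b)` then satisfies
`x ≤ K' (b - t)²` for every real `t`, because `d (b - t) = d b`. Cut the spectrum of `b` by a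
partition of unity `eᵢ = tentᵢ(b)` of tents of half-width `ε`: each `‖√x eᵢ‖² = ‖eᵢ x eᵢ‖` is at
most `K' ε²`, and as `eᵢ eⱼ = 0` for `|i - j| ≥ 2`, the even-indexed and the odd-indexed pieces of
`√x = ∑ √x eᵢ` have pairwise orthogonal ranges. Hence `‖x‖ ≤ 4 K' ε (‖b‖ + ε)`, so `x = 0`.
Real and imaginary parts then give `d = 0`.
-/

/-- A C*-semi-inner product on a right `A`-module `X` (Janfada–Shamsi Gamchi–Niknam). -/
structure CSIP (A : Type*) [CStarAlgebra A] [PartialOrder A] [StarOrderedRing A]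
    (X : Type*) [AddCommGroup X] [Module ℂ X] where
  /-- the `A`-valued semi-inner product -/
  ip : X → X → A
  /-- the right `A`-module action on `X` -/
  rsmul : X → A → X
  rsmul_add_left : ∀ (x y : X) (a : A), rsmul (x + y) a = rsmul x a + rsmul y a
  rsmul_add_right : ∀ (x : X) (a b : A), rsmul x (a + b) = rsmul x a + rsmul x b
  rsmul_mul : ∀ (x : X) (a b : A), rsmul x (a * b) = rsmul (rsmul x a) b
  rsmul_one : ∀ x : X, rsmul x 1 = x
  rsmul_smul_one : ∀ (x : X) (c : ℂ), rsmul x (c • (1 : A)) = c • x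
  ip_nonneg : ∀ x, 0 ≤ ip x x
  ip_definite : ∀ x, ip x x = 0 → x = 0
  ip_add_right : ∀ x y z, ip x (y + z) = ip x y + ip x z
  ip_smul_right : ∀ (c : ℂ) (x y : X), ip x (c • y) = c • ip x y
  ip_rsmul_right : ∀ (x y : X) (a : A), ip x (rsmul y a) = ip x y * a
  ip_rsmul_left : ∀ (x y : X) (a : A), ip (rsmul x a) y = star a * ip x y
  cauchy_schwarz : ∀ x y, ‖ip y x‖ ^ 2 ≤ ‖ip y y‖ * ‖ip x x‖

open Finset Filter Topology

noncomputable def ramp (ε c s : ℝ) : ℝ := min 1 (max 0 ((s - c) / ε))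

/-- The tent of height `1` and half-width `ε` centred at `c`, written as a difference of ramps so
that its translates along a grid of step `ε` telescope. -/
noncomputable def tent (ε c s : ℝ) : ℝ := ramp ε (c - ε) s - ramp ε c s

section Ramp

variable {ε c s : ℝ}

lemma ramp_nonneg : 0 ≤ ramp ε c s := le_min zero_le_one (le_max_left _ _)

lemma ramp_le_one : ramp ε c s ≤ 1 := min_le_left _ _

lemma ramp_of_le (hε : 0 ≤ ε) (hs : s ≤ c) : ramp ε c s = 0 := by
  rw [ramp, max_eq_left (div_nonpos_of_nonpos_of_nonneg (by linarith) hε), min_eq_right zero_le_one]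

lemma ramp_of_add_le (hε : 0 < ε) (hs : c + ε ≤ s) : ramp ε c s = 1 := by
  have : 1 ≤ (s - c) / ε := (le_div_iff₀ hε).2 (by linarith)
  rw [ramp, max_eq_right (zero_le_one.trans this), min_eq_left this]

lemma ramp_le_ramp (hε : 0 ≤ ε) {c' : ℝ} (hc : c ≤ c') : ramp ε c' s ≤ ramp ε c s := by
  unfold ramp; gcongr

@[fun_prop]
lemma continuous_ramp : Continuous (ramp ε c) := by
  unfold ramp; fun_prop

lemma tent_nonneg (hε : 0 ≤ ε) : 0 ≤ tent ε c s :=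
  sub_nonneg.2 (ramp_le_ramp hε (by linarith))

lemma tent_le_one : tent ε c s ≤ 1 := by
  rw [tent]
  linarith [ramp_le_one (ε := ε) (c := c - ε) (s := s), ramp_nonneg (ε := ε) (c := c) (s := s)]

@[fun_prop]
lemma continuous_tent : Continuous (tent ε c) := continuous_ramp.sub continuous_ramp

lemma abs_sub_lt_of_tent_ne_zero (hε : 0 < ε) (hs : tent ε c s ≠ 0) : |s - c| < ε := by
  contrapose! hs
  rcases le_abs'.1 hs with hs | hs
  · rw [tent, ramp_of_le hε.le (by linarith), ramp_of_le hε.le (by linarith), sub_zero]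
  · rw [tent, ramp_of_add_le hε (by linarith), ramp_of_add_le hε (by linarith), sub_self]

lemma tent_mul_tent_eq_zero (hε : 0 < ε) {c' : ℝ} (hc : c + 2 * ε ≤ c') :
    tent ε c s * tent ε c' s = 0 := by
  by_contra hne
  have h := abs_sub_lt_of_tent_ne_zero hε (left_ne_zero_of_mul hne)
  have h' := abs_sub_lt_of_tent_ne_zero hε (right_ne_zero_of_mul hne)
  rw [abs_lt] at h h'
  linarith

lemma sum_tent_eq_one (hε : 0 < ε) {u : ℝ} {n : ℕ} (hu : u ≤ s) (hs : s ≤ u + n * ε) :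
    ∑ i ∈ range (n + 1), tent ε (u + i * ε) s = 1 := by
  have htel := sum_range_sub' (fun i : ℕ ↦ ramp ε (u + ((i : ℝ) - 1) * ε) s) (n + 1)
  simp only [Nat.cast_add, Nat.cast_one, add_sub_cancel_right, Nat.cast_zero, zero_sub] at htel
  rw [ramp_of_add_le hε (by linarith), ramp_of_le hε.le (by linarith), sub_zero] at htel
  rw [← htel]
  refine sum_congr rfl fun i _ ↦ ?_
  rw [tent]
  congr 2; ring

end Ramp

lemma star_sub_mul_sub_le {R : Type*} [NonUnitalRing R] [StarRing R] [PartialOrder R]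
    [StarOrderedRing R] (u v : R) :
    star (u - v) * (u - v) ≤ 2 • (star u * u + star v * v) := by
  calc star (u - v) * (u - v) ≤ star (u - v) * (u - v) + star (u + v) * (u + v) :=
        le_add_of_nonneg_right (star_mul_self_nonneg _)
    _ = 2 • (star u * u + star v * v) := by
        rw [star_sub, star_add]
        noncomm_ring

section CStarRing

variable {A : Type*} [NonUnitalNormedRing A] [StarRing A] [CStarRing A]

lemma norm_sum_sq_le_sum_norm_sq {ι : Type*} (s : Finset ι) (z : ι → A)
    (hz : ∀ i ∈ s, ∀ j ∈ s, i ≠ j → z i * star (z j) = 0) :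
    ‖∑ i ∈ s, z i‖ ^ 2 ≤ ∑ i ∈ s, ‖z i‖ ^ 2 := by
  have hcross : (∑ i ∈ s, z i) * star (∑ i ∈ s, z i) = ∑ i ∈ s, z i * star (z i) := by
    rw [star_sum, sum_mul_sum]
    exact sum_congr rfl fun i hi ↦ sum_eq_single_of_mem i hi fun j hj hji ↦ hz i hi j hj hji.symm
  calc ‖∑ i ∈ s, z i‖ ^ 2 = ‖∑ i ∈ s, z i * star (z i)‖ := by
        rw [sq, ← CStarRing.norm_self_mul_star, hcross]
    _ ≤ ∑ i ∈ s, ‖z i * star (z i)‖ := norm_sum_le _ _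
    _ = ∑ i ∈ s, ‖z i‖ ^ 2 := by simp only [CStarRing.norm_self_mul_star, sq]

lemma norm_sq_le_two_mul_sum_norm_mul_sq {A : Type*} [NormedRing A] [StarRing A] [CStarRing A]
    (y : A) (e : ℕ → A) (n : ℕ) (hsum : ∑ i ∈ range n, e i = 1)
    (hsa : ∀ i, IsSelfAdjoint (e i)) (horth : ∀ i j, i + 2 ≤ j → e i * e j = 0) :
    ‖y‖ ^ 2 ≤ 2 * ∑ i ∈ range n, ‖y * e i‖ ^ 2 := by
  have hz : ∀ i j, i % 2 = j % 2 → i ≠ j → y * e i * star (y * e j) = 0 := by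
    intro i j hij hne
    have he : e i * e j = 0 := by
      rcases hne.lt_or_gt with h | h
      · exact horth i j (by omega)
      · rw [← (hsa i).star_eq, ← (hsa j).star_eq, ← star_mul, horth j i (by omega), star_zero]
    rw [star_mul, (hsa j).star_eq, mul_assoc, ← mul_assoc (e i), he, zero_mul, mul_zero]
  set E := (range n).filter (· % 2 = 0)
  set O := (range n).filter (¬ · % 2 = 0)
  have hE := norm_sum_sq_le_sum_norm_sq E (y * e ·) fun i hi j hj ↦
    hz i j (by simp only [E, mem_filter] at hi hj; omega)
  have hO := norm_sum_sq_le_sum_norm_sq O (y * e ·) fun i hi j hj ↦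
    hz i j (by simp only [O, mem_filter] at hi hj; omega)
  calc ‖y‖ ^ 2 = ‖∑ i ∈ E, y * e i + ∑ i ∈ O, y * e i‖ ^ 2 := by
        rw [sum_filter_add_sum_filter_not, ← mul_sum, hsum, mul_one]
    _ ≤ (‖∑ i ∈ E, y * e i‖ + ‖∑ i ∈ O, y * e i‖) ^ 2 := by gcongr; exact norm_add_le _ _
    _ ≤ 2 * (‖∑ i ∈ E, y * e i‖ ^ 2 + ‖∑ i ∈ O, y * e i‖ ^ 2) := add_sq_le
    _ ≤ 2 * ∑ i ∈ range n, ‖y * e i‖ ^ 2 := by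
        rw [← sum_filter_add_sum_filter_not (range n) (· % 2 = 0)]
        gcongr

end CStarRing

section CStarAlgebra

variable {A : Type*} [CStarAlgebra A] {a : A} {ε : ℝ}

lemma star_mul_mul_le_norm_sq_smul [PartialOrder A] [StarOrderedRing A] (c b : A) :
    star (c * b) * (c * b) ≤ ‖c‖ ^ 2 • (star b * b) := by
  simpa only [star_mul, mul_assoc, CStarRing.norm_star_mul_self, sq] using
    CStarAlgebra.star_left_conjugate_le_norm_smul (a := b) (b := star c * c)

lemma sum_cfc_tent_eq_one [Nontrivial A] (ha : IsSelfAdjoint a) (hε : 0 < ε) {n : ℕ}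
    (hn : 2 * ‖a‖ ≤ n * ε) : ∑ i ∈ range (n + 1), cfc (tent ε (-‖a‖ + i * ε)) a = 1 := by
  rw [← cfc_sum .., ← cfc_one ℝ a]
  refine cfc_congr fun s hs ↦ ?_
  have hs : |s| ≤ ‖a‖ := by simpa using spectrum.norm_le_norm_of_mem hs
  rw [abs_le] at hs
  simpa using sum_tent_eq_one hε (u := -‖a‖) (n := n) (s := s) (by linarith) (by linarith)

lemma cfc_tent_mul_cfc_tent_eq_zero (hε : 0 < ε) {c c' : ℝ} (hc : c + 2 * ε ≤ c') :
    cfc (tent ε c) a * cfc (tent ε c') a = 0 := by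
  rw [← cfc_mul .., cfc_congr fun s _ ↦ tent_mul_tent_eq_zero hε hc]
  exact cfc_zero ℝ a

lemma cfc_tent_mul_sq_mul_le [PartialOrder A] [StarOrderedRing A] (ha : IsSelfAdjoint a)
    (hε : 0 < ε) (c : ℝ) :
    cfc (tent ε c) a * (a - algebraMap ℝ A c) ^ 2 * cfc (tent ε c) a ≤
      algebraMap ℝ A (ε ^ 2) := by
  have hpoly : (a - algebraMap ℝ A c) ^ 2 = cfc (fun s ↦ (s - c) ^ 2) a := by
    rw [cfc_pow .., cfc_sub .., cfc_id' .., cfc_const ..]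
  rw [hpoly, ← cfc_mul .., ← cfc_mul ..]
  refine cfc_le_algebraMap _ _ a fun s _ ↦ ?_
  by_cases h0 : tent ε c s = 0
  · simp [h0]; positivity
  have hdist : (s - c) ^ 2 ≤ ε ^ 2 := by
    simpa only [sq_abs] using
      pow_le_pow_left₀ (abs_nonneg _) (abs_sub_lt_of_tent_ne_zero hε h0).le 2
  have htent : tent ε c s ^ 2 ≤ 1 := pow_le_one₀ (tent_nonneg hε.le) tent_le_one
  calc tent ε c s * (s - c) ^ 2 * tent ε c s = tent ε c s ^ 2 * (s - c) ^ 2 := by ring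
    _ ≤ 1 * ε ^ 2 := mul_le_mul htent hdist (sq_nonneg _) zero_le_one
    _ = ε ^ 2 := one_mul _

lemma norm_le_of_le_smul_sub_algebraMap_sq [PartialOrder A] [StarOrderedRing A] [Nontrivial A]
    {x : A} (ha : IsSelfAdjoint a) (hx : 0 ≤ x) {K : ℝ} (hK : 0 ≤ K)
    (h : ∀ t : ℝ, x ≤ K • (a - algebraMap ℝ A t) ^ 2) (hε : 0 < ε) {n : ℕ}
    (hn : 2 * ‖a‖ ≤ n * ε) : ‖x‖ ≤ 2 * ((n + 1) * (K * ε ^ 2)) := by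
  set t : ℕ → ℝ := fun i ↦ -‖a‖ + i * ε
  set e : ℕ → A := fun i ↦ cfc (tent ε (t i)) a
  have hsa : ∀ i, IsSelfAdjoint (e i) := fun i ↦ cfc_predicate _ _
  have horth : ∀ i j, i + 2 ≤ j → e i * e j = 0 := by
    intro i j hij
    have hij' : (i : ℝ) + 2 ≤ j := by exact_mod_cast hij
    exact cfc_tent_mul_cfc_tent_eq_zero hε (by simp only [t]; nlinarith)
  have hpiece : ∀ i, ‖CFC.sqrt x * e i‖ ^ 2 ≤ K * ε ^ 2 := by
    intro i
    have hconj : e i * x * e i ≤ algebraMap ℝ A (K * ε ^ 2) := by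
      calc e i * x * e i ≤ e i * (K • (a - algebraMap ℝ A (t i)) ^ 2) * e i := by
            simpa only [(hsa i).star_eq] using star_left_conjugate_le_conjugate (h (t i)) (e i)
        _ = K • (e i * (a - algebraMap ℝ A (t i)) ^ 2 * e i) := by
            rw [mul_smul_comm, smul_mul_assoc]
        _ ≤ K • algebraMap ℝ A (ε ^ 2) :=
            smul_le_smul_of_nonneg_left (cfc_tent_mul_sq_mul_le ha hε _) hK
        _ = algebraMap ℝ A (K * ε ^ 2) := by rw [map_mul, Algebra.smul_def]
    have hnonneg : 0 ≤ e i * x * e i := by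
      simpa only [(hsa i).star_eq] using star_left_conjugate_nonneg hx (e i)
    have hsqrt : star (CFC.sqrt x * e i) * (CFC.sqrt x * e i) = e i * x * e i := by
      rw [star_mul, (hsa i).star_eq, (CFC.sqrt_nonneg x).isSelfAdjoint.star_eq, mul_assoc,
        ← mul_assoc (CFC.sqrt x), CFC.sqrt_mul_sqrt_self x hx, ← mul_assoc]
    rw [sq, ← CStarRing.norm_star_mul_self, hsqrt]
    exact (CStarAlgebra.norm_le_iff_le_algebraMap _ (by positivity) hnonneg).2 hconj
  calc ‖x‖ = ‖CFC.sqrt x‖ ^ 2 := by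
        rw [sq, ← CStarRing.norm_star_mul_self, (CFC.sqrt_nonneg x).isSelfAdjoint.star_eq,
          CFC.sqrt_mul_sqrt_self x hx]
    _ ≤ 2 * ∑ i ∈ range (n + 1), ‖CFC.sqrt x * e i‖ ^ 2 :=
        norm_sq_le_two_mul_sum_norm_mul_sq _ e _ (sum_cfc_tent_eq_one ha hε hn) hsa horth
    _ ≤ 2 * ((n + 1) * (K * ε ^ 2)) := by
        gcongr
        simpa using sum_le_card_nsmul (range (n + 1)) _ _ fun i _ ↦ hpiece i

theorem eq_zero_of_le_smul_sub_algebraMap_sq [PartialOrder A] [StarOrderedRing A] {x : A}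
    (ha : IsSelfAdjoint a) (hx : 0 ≤ x) {K : ℝ} (hK : 0 ≤ K)
    (h : ∀ t : ℝ, x ≤ K • (a - algebraMap ℝ A t) ^ 2) : x = 0 := by
  nontriviality A
  have hbound : ∀ ε > 0, ‖x‖ ≤ 4 * K * ε * (‖a‖ + ε) := by
    intro ε hε
    set n := ⌈2 * ‖a‖ / ε⌉₊
    have hn : 2 * ‖a‖ ≤ n * ε := (div_le_iff₀ hε).1 (Nat.le_ceil _)
    have hn' : (n : ℝ) * ε ≤ 2 * ‖a‖ + ε := by
      have hceil := (Nat.ceil_lt_add_one (by positivity : 0 ≤ 2 * ‖a‖ / ε)).le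
      calc (n : ℝ) * ε ≤ (2 * ‖a‖ / ε + 1) * ε := by gcongr
        _ = 2 * ‖a‖ + ε := by field_simp
    calc ‖x‖ ≤ 2 * ((n + 1) * (K * ε ^ 2)) :=
          norm_le_of_le_smul_sub_algebraMap_sq ha hx hK h hε hn
      _ = 2 * K * ε * (n * ε + ε) := by ring
      _ ≤ 2 * K * ε * (2 * ‖a‖ + 2 * ε) := by gcongr 2 * K * ε * ?_; linarith
      _ = 4 * K * ε * (‖a‖ + ε) := by ring
  have hlim : Tendsto (fun ε ↦ 4 * K * ε * (‖a‖ + ε)) (𝓝[>] 0) (𝓝 0) := by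
    have : Continuous fun ε : ℝ ↦ 4 * K * ε * (‖a‖ + ε) := by fun_prop
    simpa using (this.tendsto 0).mono_left nhdsWithin_le_nhds
  exact norm_le_zero_iff.1 (ge_of_tendsto hlim (eventually_nhdsWithin_of_forall hbound))

theorem LinearMap.eq_zero_of_map_one_of_star_mul_self_le [PartialOrder A] [StarOrderedRing A]
    (d : A →ₗ[ℂ] A) (hd1 : d 1 = 0) {K : ℝ} (hK : 0 ≤ K)
    (h : ∀ a, star (d a) * d a ≤ K • (star a * a)) : d = 0 := by
  have hsa : ∀ b, IsSelfAdjoint b → d b = 0 := by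
    intro b hb
    have hshift : ∀ t : ℝ, d (b - algebraMap ℝ A t) = d b := fun t ↦ by
      rw [map_sub, Algebra.algebraMap_eq_smul_one, map_smul_of_tower, hd1, smul_zero, sub_zero]
    refine (CStarRing.star_mul_self_eq_zero_iff _).1 <|
      eq_zero_of_le_smul_sub_algebraMap_sq hb (star_mul_self_nonneg (d b)) hK fun t ↦ ?_
    simpa only [hshift, (hb.sub (IsSelfAdjoint.algebraMap A (.all t))).star_eq, sq]
      using h (b - algebraMap ℝ A t)
  ext a
  rw [← realPart_add_I_smul_imaginaryPart a, map_add, map_smul, hsa _ (realPart a).2,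
    hsa _ (imaginaryPart a).2, smul_zero, add_zero, zero_apply]

end CStarAlgebra

/-- Paschke–Johnson lemma: if `r(a)*r(a) ≤ K a*a` then `r(a) = r(1)a`. -/
theorem stmt10 (A : Type*) [CStarAlgebra A] [PartialOrder A] [StarOrderedRing A]
    (r : A →ₗ[ℂ] A) (K : ℝ) (hK : 0 ≤ K)
    (h : ∀ a : A, star (r a) * r a ≤ K • (star a * a)) :
    ∀ a : A, r a = r 1 * a := by
  set d : A →ₗ[ℂ] A := r - LinearMap.mulLeft ℂ (r 1)
  have hd : ∀ a, star (d a) * d a ≤ (2 * K + 2 * ‖r 1‖ ^ 2) • (star a * a) := fun a ↦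
    calc star (d a) * d a = star (r a - r 1 * a) * (r a - r 1 * a) := rfl
      _ ≤ 2 • (star (r a) * r a + star (r 1 * a) * (r 1 * a)) := star_sub_mul_sub_le _ _
      _ ≤ 2 • (K • (star a * a) + ‖r 1‖ ^ 2 • (star a * a)) := by
          gcongr
          exacts [h a, star_mul_mul_le_norm_sq_smul _ _]
      _ = (2 * K + 2 * ‖r 1‖ ^ 2) • (star a * a) := by module
  have hd0 : d = 0 := d.eq_zero_of_map_one_of_star_mul_self_le (by simp [d]) (by positivity) hd
  intro a
  simpa [d, sub_eq_zero] using LinearMap.congr_fun hd0 a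
end

section
/- Let X and Y be C*-semi-inner product modules over a unital C*-algebra A and T: X → Y a bounded A-linear map with ‖T‖ ≤ 1. Then [Tx, Tx] ≤ [x, x] for all x ∈ X. -/
open CFC Ring

lemma le_of_forall_le_add_algebraMap {A : Type*} [Ring A] [Algebra ℝ A] [TopologicalSpace A]
    [PartialOrder A] [OrderClosedTopology A] [ContinuousAdd A] [ContinuousSMul ℝ A] {a b : A}
    (h : ∀ ε : ℝ, 0 < ε → a ≤ b + algebraMap ℝ A ε) : a ≤ b := by
  have hlim : Filter.Tendsto (fun ε : ℝ => b + algebraMap ℝ A ε) (nhdsWithin 0 (Set.Ioi 0))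
      (nhds b) := by
    have : Continuous fun ε : ℝ => b + algebraMap ℝ A ε := by fun_prop
    simpa using (this.tendsto 0).mono_left nhdsWithin_le_nhds
  exact ge_of_tendsto hlim (eventually_nhdsWithin_of_forall h)

lemma IsSelfAdjoint.le_one_of_norm_le_one {A : Type*} [CStarAlgebra A] [PartialOrder A]
    [StarOrderedRing A] {a : A} (ha : IsSelfAdjoint a) (h : ‖a‖ ≤ 1) : a ≤ 1 := by
  simpa using ha.le_algebraMap_norm_self.trans (algebraMap_mono A h)

namespace CStarAlgebra

variable {A : Type*} [CStarAlgebra A] [PartialOrder A] [StarOrderedRing A]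

lemma le_of_forall_norm_star_conjugate_le {b d : A} (hb : 0 ≤ b) (hd : IsSelfAdjoint d)
    (h : ∀ a : A, ‖star a * d * a‖ ≤ ‖star a * b * a‖) : d ≤ b := by
  refine le_of_forall_le_add_algebraMap fun ε hε => ?_
  set c := b + algebraMap ℝ A ε
  have hε' : IsStrictlyPositive (algebraMap ℝ A ε) := isStrictlyPositive_algebraMap hε
  have hc : IsStrictlyPositive c := hε'.nonneg_add hb
  have hs : IsSelfAdjoint (sqrt c⁻¹ʳ) := .of_nonneg (sqrt_nonneg _)
  have hb_norm : ‖conjSqrt c⁻¹ʳ b‖ ≤ 1 := by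
    have h_le : conjSqrt c⁻¹ʳ b ≤ 1 := by
      rw [← conjSqrt_ringInverse_self c]
      exact conjSqrt_le_conjSqrt (le_add_of_nonneg_right hε'.nonneg)
    have h_nonneg : 0 ≤ conjSqrt c⁻¹ʳ b := by simpa using conjSqrt_le_conjSqrt (c := c⁻¹ʳ) hb
    exact (norm_le_one_iff_of_nonneg _ h_nonneg).mpr h_le
  have hd_norm : ‖conjSqrt c⁻¹ʳ d‖ ≤ ‖conjSqrt c⁻¹ʳ b‖ := by
    simpa only [hs.star_eq, conjSqrt_apply] using h (sqrt c⁻¹ʳ)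
  have hd_le : conjSqrt c⁻¹ʳ d ≤ 1 :=
    (hd.conjugate_self hs).le_one_of_norm_le_one (hd_norm.trans hb_norm)
  calc d = conjSqrt c (conjSqrt c⁻¹ʳ d) := (conjSqrt_conjSqrt_ringInverse c d).symm
    _ ≤ conjSqrt c 1 := conjSqrt_le_conjSqrt hd_le
    _ = c := conjSqrt_one c

end CStarAlgebra

namespace CSIP

variable {A : Type*} [CStarAlgebra A] [PartialOrder A] [StarOrderedRing A]
  {X : Type*} [AddCommGroup X] [Module ℂ X]

lemma ip_rsmul_rsmul (S : CSIP A X) (x : X) (a : A) :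
    S.ip (S.rsmul x a) (S.rsmul x a) = star a * S.ip x x * a := by
  rw [S.ip_rsmul_left, S.ip_rsmul_right, mul_assoc]

end CSIP

/-- A bounded `A`-linear map with `‖T‖ ≤ 1` satisfies `[Tx,Tx] ≤ [x,x]`. -/
theorem stmt12 (A : Type*) [CStarAlgebra A] [PartialOrder A] [StarOrderedRing A]
    (X Y : Type*) [AddCommGroup X] [Module ℂ X] [AddCommGroup Y] [Module ℂ Y]
    (SX : CSIP A X) (SY : CSIP A Y) (T : X →ₗ[ℂ] Y)
    (hA : ∀ (x : X) (a : A), T (SX.rsmul x a) = SY.rsmul (T x) a)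
    (hT : ∀ x : X, Real.sqrt ‖SY.ip (T x) (T x)‖ ≤ Real.sqrt ‖SX.ip x x‖) :
    ∀ x : X, SY.ip (T x) (T x) ≤ SX.ip x x := by
  intro x
  refine CStarAlgebra.le_of_forall_norm_star_conjugate_le (SX.ip_nonneg x)
    (SY.ip_nonneg (T x)).isSelfAdjoint fun a => ?_
  rw [← SX.ip_rsmul_rsmul, ← SY.ip_rsmul_rsmul, ← hA]
  exact (Real.sqrt_le_sqrt_iff (norm_nonneg _)).mp (hT _)
end
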